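/- Let (W_t)_{t∈ℕ} be a nonnegative supermartingale with respect to a filtration (F_t), and let τ be a stopping time, such that: (i) W_0 = k; (ii) |W_{t+1} − W_t| ≤ B almost surely for a constant B < ∞; (iii) Var(W_{t+1} | F_t) ≥ σ² > 0 almost surely on the event {τ > t}. Then for every u > 12B²/σ², P(τ > u) ≤ 4k/(σ√u). -/

import Mathlib

/-!
Let `M` be the martingale part of the Doob decomposition of `W`. It dominates `W`, so it is
nonnegative; it starts at `k`, its increments are bounded by `2B`, and they have the same
conditional variance as those of `W`. Put `h = σ√u/2`, `n = ⌊u⌋`, and stop `M` at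
`ρ = min(τ, first time in [0, n] at which M ≥ h)`; then `0 ≤ M_ρ ≤ h + 2B` and `E[M_ρ] = k`.
On `{τ > n}` either `M_ρ ≥ h`, which has probability at most `k/h` by Markov's inequality,
or `ρ = n`. Summing the conditional variances of the increments of the stopped martingale gives
`σ² ∑_{t<n} P(ρ > t) ≤ E[M_ρ²] ≤ (h + 2B) k`, so `P(ρ = n) ≤ (h + 2B) k / (σ² n)`.
For `u > 12B²/σ²` each of the two bounds is at most `2k/(σ√u)`; the remaining cases are
trivial: if `σ√u ≤ 4k` the bound exceeds `1`, and if `σ > 2B` the variance condition forces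
`τ ≤ n` almost surely, because the centred increments are bounded by `2B`.
-/

open MeasureTheory Filter
open scoped ENNReal

namespace MeasureTheory

variable {Ω : Type*} {m0 : MeasurableSpace Ω} {μ : Measure Ω} {ℱ : Filtration ℕ m0}

theorem stoppedProcess_eq_of_eq_of_le {β : Type*} {u : ℕ → Ω → β} {ρ : Ω → ℕ∞} {ω : Ω}
    {j t : ℕ} (hρ : ρ ω = j) (hj : j ≤ t) : stoppedProcess u ρ t ω = u j ω := by
  have hle : ρ ω ≤ (t : ℕ∞) := hρ.trans_le (Nat.cast_le.2 hj)
  rw [stoppedProcess_eq_of_ge hle, hρ]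
  rfl

theorem exists_stoppedProcess_eq {β : Type*} (u : ℕ → Ω → β) (ρ : Ω → ℕ∞) (t : ℕ) (ω : Ω) :
    ∃ j : ℕ, (j : ℕ∞) ≤ ρ ω ∧ stoppedProcess u ρ t ω = u j ω := by
  rcases le_total (t : ℕ∞) (ρ ω) with h | h
  · exact ⟨t, h, stoppedProcess_eq_of_le h⟩
  · obtain ⟨r, hr⟩ := ENat.ne_top_iff_exists.1 (ne_top_of_le_ne_top (ENat.natCast_ne_top t) h)
    exact ⟨r, hr.le, stoppedProcess_eq_of_eq_of_le hr.symm (Nat.cast_le.1 (hr.trans_le h))⟩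

theorem stoppedProcess_add_one_sub {β : Type*} [AddGroup β] (u : ℕ → Ω → β) (ρ : Ω → ℕ∞)
    (t : ℕ) (ω : Ω) :
    stoppedProcess u ρ (t + 1) ω - stoppedProcess u ρ t ω =
      {ω | (t : ℕ∞) < ρ ω}.indicator (fun ω => u (t + 1) ω - u t ω) ω := by
  by_cases h : (t : ℕ∞) < ρ ω
  · have h' : ((t + 1 : ℕ) : ℕ∞) ≤ ρ ω := Order.add_one_le_of_lt h
    rw [Set.indicator_of_mem (show ω ∈ {ω | (t : ℕ∞) < ρ ω} from h),
      stoppedProcess_eq_of_le h.le, stoppedProcess_eq_of_le h']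
  · have h' : ρ ω ≤ ((t + 1 : ℕ) : ℕ∞) := (not_lt.1 h).trans (by exact_mod_cast t.le_succ)
    rw [Set.indicator_of_notMem (show ω ∉ {ω | (t : ℕ∞) < ρ ω} from h),
      stoppedProcess_eq_of_ge (not_lt.1 h), stoppedProcess_eq_of_ge h', sub_self]

theorem le_add_of_le_hittingBtwn {u : ℕ → Ω → ℝ} {a c : ℝ} {m j : ℕ} {ω : Ω} (h0 : u 0 ω < a)
    (hc : 0 ≤ c) (hstep : ∀ i, u (i + 1) ω ≤ u i ω + c)
    (hj : j ≤ hittingBtwn u (Set.Ici a) 0 m ω) : u j ω ≤ a + c := by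
  cases j with
  | zero => linarith
  | succ i =>
    have hi : u i ω < a := not_le.1 (notMem_of_lt_hittingBtwn hj (Nat.zero_le i))
    linarith [hstep i]

theorem setOf_lt_subset_stoppedProcess_hittingBtwn {β : Type*} (u : ℕ → Ω → β) (s : Set β)
    (τ : Ω → ℕ∞) (n : ℕ) :
    {ω | (n : ℕ∞) < τ ω} ⊆
      {ω | stoppedProcess u (fun ω => (min (τ ω) (hittingBtwn u s 0 n ω : ℕ) : ℕ∞)) n ω ∈ s} ∪
        {ω | (n : ℕ∞) ≤ min (τ ω) (hittingBtwn u s 0 n ω : ℕ)} := by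
  intro ω (hτω : (n : ℕ∞) < τ ω)
  rcases (hittingBtwn_le (u := u) (s := s) (n := 0) (m := n) ω).lt_or_eq with hlt | heq
  · have hρ : min (τ ω) (hittingBtwn u s 0 n ω : ℕ) = hittingBtwn u s 0 n ω :=
      min_eq_right ((Nat.cast_le.2 hlt.le).trans hτω.le)
    have hN := stoppedProcess_eq_of_eq_of_le (u := u)
      (ρ := fun ω => (min (τ ω) (hittingBtwn u s 0 n ω : ℕ) : ℕ∞)) hρ hlt.le
    exact Or.inl ((congrArg (· ∈ s) hN).mpr (hittingBtwn_mem_set_of_hittingBtwn_lt hlt))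
  · exact Or.inr (le_min hτω.le (by rw [heq]))

theorem natCast_mul_measureReal_le_sum [IsFiniteMeasure μ] (ρ : Ω → ℕ∞) (n : ℕ) :
    n * μ.real {ω | (n : ℕ∞) ≤ ρ ω} ≤ ∑ t ∈ Finset.range n, μ.real {ω | (t : ℕ∞) < ρ ω} := by
  calc (n : ℝ) * μ.real {ω | (n : ℕ∞) ≤ ρ ω}
      = ∑ _t ∈ Finset.range n, μ.real {ω | (n : ℕ∞) ≤ ρ ω} := by simp
    _ ≤ _ := Finset.sum_le_sum fun t ht => measureReal_mono fun ω (hω : (n : ℕ∞) ≤ ρ ω) =>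
        lt_of_lt_of_le (by exact_mod_cast Finset.mem_range.1 ht) hω

theorem integral_sq_le_mul_integral {f : Ω → ℝ} {a : ℝ} (hf : Integrable f μ)
    (hbd : ∀ᵐ ω ∂μ, 0 ≤ f ω ∧ f ω ≤ a) (hf2 : Integrable (fun ω => f ω ^ 2) μ) :
    ∫ ω, f ω ^ 2 ∂μ ≤ a * ∫ ω, f ω ∂μ := by
  rw [← integral_const_mul]
  exact integral_mono_ae hf2 (hf.const_mul a) (hbd.mono fun ω h => by nlinarith)

theorem memLp_of_memLp_zero_of_abs_sub_le [IsFiniteMeasure μ] {p : ℝ≥0∞} {X : ℕ → Ω → ℝ}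
    (hX : ∀ t, AEStronglyMeasurable (X t) μ) (h0 : MemLp (X 0) p μ) {c : ℝ}
    (hc : ∀ t, ∀ᵐ ω ∂μ, |X (t + 1) ω - X t ω| ≤ c) (t : ℕ) : MemLp (X t) p μ := by
  induction t with
  | zero => exact h0
  | succ t ih =>
    have hΔ : MemLp (X (t + 1) - X t) p μ := MemLp.of_bound ((hX (t + 1)).sub (hX t)) c (hc t)
    simpa using hΔ.add ih

theorem mul_measureReal_le_setIntegral_of_le_condExp [IsFiniteMeasure μ] {m : MeasurableSpace Ω}
    (hm : m ≤ m0) {f : Ω → ℝ} (hf : Integrable f μ) {s : Set Ω} (hs : MeasurableSet[m] s)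
    {c : ℝ} (hc : ∀ᵐ ω ∂μ, ω ∈ s → c ≤ (μ[f|m]) ω) :
    c * μ.real s ≤ ∫ ω in s, f ω ∂μ := by
  rw [← setIntegral_condExp hm hf hs, mul_comm, ← smul_eq_mul, ← setIntegral_const]
  exact setIntegral_mono_on_ae (integrableOn_const (measure_ne_top _ _))
    integrable_condExp.integrableOn (hm s hs) hc

theorem measure_eq_zero_of_le_condExp_sq [IsFiniteMeasure μ] {m : MeasurableSpace Ω} {X : Ω → ℝ}
    {c v : ℝ} (hX : ∀ᵐ ω ∂μ, |X ω| ≤ c) {s : Set Ω}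
    (hv : ∀ᵐ ω ∂μ, ω ∈ s → v ≤ (μ[fun ω => X ω ^ 2|m]) ω) (hcv : c ^ 2 < v) : μ s = 0 := by
  have hX2 : ∀ᵐ ω ∂μ, |X ω ^ 2| ≤ c ^ 2 :=
    hX.mono fun ω hω => (abs_pow _ _).trans_le (pow_le_pow_left₀ (abs_nonneg _) hω 2)
  refine measure_eq_zero_iff_ae_notMem.2 ?_
  filter_upwards [hv, ae_bdd_abs_condExp_of_ae_bdd_abs (m := m) hX2] with ω hvω hbd hs
  linarith [hvω hs, le_abs_self ((μ[fun ω => X ω ^ 2|m]) ω)]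

theorem abs_sub_condExp_le_two_mul {m : MeasurableSpace Ω} (hm : m ≤ m0)
    [SigmaFinite (μ.trim hm)] {Y Z : Ω → ℝ} (hY : Integrable Y μ) (hZ : Integrable Z μ)
    (hZm : StronglyMeasurable[m] Z) {B : ℝ} (hB : ∀ᵐ ω ∂μ, |Y ω - Z ω| ≤ B) :
    ∀ᵐ ω ∂μ, |Y ω - (μ[Y|m]) ω| ≤ 2 * B := by
  have hZ' : μ[Z|m] = Z := condExp_of_stronglyMeasurable hm hZm hZ
  filter_upwards [hB, condExp_sub hY hZ m,
    ae_bdd_abs_condExp_of_ae_bdd_abs (m := m) (f := Y - Z) hB] with ω hω hsub hbd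
  rw [hsub, Pi.sub_apply, hZ'] at hbd
  calc |Y ω - (μ[Y|m]) ω| = |(Y ω - Z ω) - ((μ[Y|m]) ω - Z ω)| := by ring_nf
    _ ≤ |Y ω - Z ω| + |(μ[Y|m]) ω - Z ω| := abs_sub _ _
    _ ≤ 2 * B := by linarith

theorem martingale_stoppedProcess [IsFiniteMeasure μ] {M : ℕ → Ω → ℝ} {τ : Ω → ℕ∞}
    (hM : Martingale M ℱ μ) (hτ : IsStoppingTime ℱ τ) :
    Martingale (stoppedProcess M τ) ℱ μ := by
  refine martingale_iff.2 ⟨?_, hM.submartingale.stoppedProcess hτ⟩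
  have h := (hM.neg.submartingale.stoppedProcess hτ).neg
  convert h using 1
  ext t ω
  exact (neg_neg _).symm

theorem Martingale.integral_mul_sub_eq_zero [IsFiniteMeasure μ] {M : ℕ → Ω → ℝ}
    (hM : Martingale M ℱ μ) {i j : ℕ} (hij : i ≤ j) {g : Ω → ℝ}
    (hg : StronglyMeasurable[ℱ i] g) (hgM : Integrable (g * (M j - M i)) μ) :
    ∫ ω, g ω * (M j ω - M i ω) ∂μ = 0 := by
  have hcond : μ[M j - M i|ℱ i] =ᵐ[μ] 0 := by
    have hMi : μ[M i|ℱ i] = M i :=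
      condExp_of_stronglyMeasurable (ℱ.le i) (hM.stronglyAdapted i) (hM.integrable i)
    filter_upwards [condExp_sub (hM.integrable j) (hM.integrable i) (ℱ i), hM.condExp_ae_eq hij]
      with ω hsub hj
    simp [hsub, hj, hMi]
  calc ∫ ω, g ω * (M j ω - M i ω) ∂μ = ∫ ω, (μ[g * (M j - M i)|ℱ i]) ω ∂μ :=
        (integral_condExp (ℱ.le i)).symm
    _ = ∫ ω, (g * μ[M j - M i|ℱ i]) ω ∂μ := integral_congr_ae
        (condExp_mul_of_stronglyMeasurable_left hg hgM ((hM.integrable j).sub (hM.integrable i)))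
    _ = 0 := integral_eq_zero_of_ae (hcond.mono fun ω hω => by simp [hω])

theorem Martingale.integral_sq_eq_add [IsFiniteMeasure μ] {M : ℕ → Ω → ℝ}
    (hM : Martingale M ℱ μ) {i j : ℕ} (hij : i ≤ j) (hi : MemLp (M i) 2 μ)
    (hj : MemLp (M j) 2 μ) :
    ∫ ω, M j ω ^ 2 ∂μ = ∫ ω, M i ω ^ 2 ∂μ + ∫ ω, (M j ω - M i ω) ^ 2 ∂μ := by
  have hij2 : MemLp (M j - M i) 2 μ := hj.sub hi
  have hcross : Integrable (fun ω => M i ω * (M j ω - M i ω)) μ := hi.integrable_mul hij2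
  have hsq : Integrable (fun ω => (M j ω - M i ω) ^ 2) μ := hij2.integrable_sq
  calc ∫ ω, M j ω ^ 2 ∂μ
      = ∫ ω, M i ω ^ 2 + (2 * (M i ω * (M j ω - M i ω)) + (M j ω - M i ω) ^ 2) ∂μ := by
        congr 1; ext ω; ring
    _ = ∫ ω, M i ω ^ 2 ∂μ +
          (2 * ∫ ω, M i ω * (M j ω - M i ω) ∂μ + ∫ ω, (M j ω - M i ω) ^ 2 ∂μ) := by
        rw [integral_add hi.integrable_sq ((hcross.const_mul 2).fun_add hsq),
          integral_add (hcross.const_mul 2) hsq, integral_const_mul]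
    _ = _ := by rw [hM.integral_mul_sub_eq_zero hij (hM.stronglyAdapted i) hcross]; ring

theorem Martingale.mul_sum_measureReal_lt_le_integral_sq_stoppedProcess [IsFiniteMeasure μ]
    {M : ℕ → Ω → ℝ} (hM : Martingale M ℱ μ) {ρ : Ω → ℕ∞} (hρ : IsStoppingTime ℱ ρ)
    (hL2 : ∀ t, MemLp (M t) 2 μ) {v : ℝ}
    (hvar : ∀ t : ℕ, ∀ᵐ ω ∂μ, (t : ℕ∞) < ρ ω →
      v ≤ (μ[fun ω => (M (t + 1) ω - M t ω) ^ 2|ℱ t]) ω) (n : ℕ) :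
    v * ∑ t ∈ Finset.range n, μ.real {ω | (t : ℕ∞) < ρ ω} ≤
      ∫ ω, stoppedProcess M ρ n ω ^ 2 ∂μ := by
  induction n with
  | zero => simpa using integral_nonneg fun ω => sq_nonneg _
  | succ n ih =>
    have hNL2 := memLp_stoppedProcess hρ hL2
    have hs : MeasurableSet[ℱ n] {ω | (n : ℕ∞) < ρ ω} := hρ.measurableSet_gt n
    have hstep : v * μ.real {ω | (n : ℕ∞) < ρ ω} ≤
        ∫ ω, (stoppedProcess M ρ (n + 1) ω - stoppedProcess M ρ n ω) ^ 2 ∂μ := by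
      have hΔ : Integrable (fun ω => (M (n + 1) ω - M n ω) ^ 2) μ :=
        ((hL2 (n + 1)).sub (hL2 n)).integrable_sq
      calc v * μ.real {ω | (n : ℕ∞) < ρ ω}
          ≤ ∫ ω in {ω | (n : ℕ∞) < ρ ω}, (M (n + 1) ω - M n ω) ^ 2 ∂μ :=
            mul_measureReal_le_setIntegral_of_le_condExp (ℱ.le n) hΔ hs (hvar n)
        _ = _ := by
            rw [← integral_indicator (ℱ.le n _ hs)]
            congr 1 with ω
            simp only [stoppedProcess_add_one_sub, Set.indicator_apply]
            split_ifs <;> simp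
    rw [(martingale_stoppedProcess hM hρ).integral_sq_eq_add n.le_succ (hNL2 n) (hNL2 (n + 1)),
      Finset.sum_range_succ, mul_add]
    exact add_le_add ih hstep

theorem Martingale.integral_stoppedProcess [IsFiniteMeasure μ] {M : ℕ → Ω → ℝ}
    (hM : Martingale M ℱ μ) {ρ : Ω → ℕ∞} (hρ : IsStoppingTime ℱ ρ) (n : ℕ) :
    ∫ ω, stoppedProcess M ρ n ω ∂μ = ∫ ω, M 0 ω ∂μ := by
  rw [← integral_condExp (ℱ.le 0),
    integral_congr_ae ((martingale_stoppedProcess hM hρ).condExp_ae_eq n.zero_le)]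
  congr 1 with ω
  exact stoppedProcess_eq_of_le (show ((0 : ℕ) : ℕ∞) ≤ ρ ω from zero_le)

theorem Martingale.measureReal_lt_stoppingTime_le [IsProbabilityMeasure μ] {M : ℕ → Ω → ℝ}
    (hM : Martingale M ℱ μ) (hnonneg : ∀ᵐ ω ∂μ, ∀ t, 0 ≤ M t ω) {k : ℝ}
    (h0 : ∀ᵐ ω ∂μ, M 0 ω = k) {c : ℝ} (hstep : ∀ t, ∀ᵐ ω ∂μ, |M (t + 1) ω - M t ω| ≤ c)
    {τ : Ω → ℕ∞} (hτ : IsStoppingTime ℱ τ) {v : ℝ} (hv : 0 < v)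
    (hvar : ∀ t : ℕ, ∀ᵐ ω ∂μ, (t : ℕ∞) < τ ω →
      v ≤ (μ[fun ω => (M (t + 1) ω - M t ω) ^ 2|ℱ t]) ω)
    {h : ℝ} (hkh : k < h) {n : ℕ} (hn : 0 < n) :
    μ.real {ω | (n : ℕ∞) < τ ω} ≤ k / h + (h + c) * k / (v * n) := by
  have hc : 0 ≤ c := (abs_nonneg _).trans (hstep 0).exists.choose_spec
  have hk : 0 ≤ k := by
    obtain ⟨ω, hω, hω0⟩ := (hnonneg.and h0).exists
    exact hω0 ▸ hω 0
  have hh : 0 < h := hk.trans_lt hkh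
  set ρ : Ω → ℕ∞ := fun ω => (min (τ ω) (hittingBtwn M (Set.Ici h) 0 n ω : ℕ) : ℕ∞)
  have hρ : IsStoppingTime ℱ ρ :=
    hτ.min (hM.stronglyAdapted.adapted.isStoppingTime_hittingBtwn measurableSet_Ici)
  set N := stoppedProcess M ρ
  have hL2 : ∀ t, MemLp (M t) 2 μ := memLp_of_memLp_zero_of_abs_sub_le
    (fun t => (hM.integrable t).aestronglyMeasurable)
    ((memLp_const k).ae_eq (h0.mono fun ω hω => hω.symm)) hstep
  have hNint : Integrable (N n) μ := (memLp_stoppedProcess hρ hL2 n).integrable one_le_two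
  have hNbd : ∀ᵐ ω ∂μ, 0 ≤ N n ω ∧ N n ω ≤ h + c := by
    filter_upwards [hnonneg, h0, ae_all_iff.2 hstep] with ω hpos hω0 hstepω
    obtain ⟨j, hj, hNj⟩ := exists_stoppedProcess_eq M ρ n ω
    rw [show N n ω = M j ω from hNj]
    refine ⟨hpos j, le_add_of_le_hittingBtwn (m := n) (hω0 ▸ hkh) hc
      (fun i => by linarith [(abs_le.1 (hstepω i)).2]) ?_⟩
    exact_mod_cast hj.trans (min_le_right _ _)
  have hNmean : ∫ ω, N n ω ∂μ = k := by
    rw [hM.integral_stoppedProcess hρ, integral_congr_ae h0]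
    simp
  have hmarkov : h * μ.real {ω | h ≤ N n ω} ≤ k :=
    hNmean ▸ mul_meas_ge_le_integral_of_nonneg (hNbd.mono fun ω hω => hω.1) hNint h
  have hsecond : v * ∑ t ∈ Finset.range n, μ.real {ω | (t : ℕ∞) < ρ ω} ≤ (h + c) * k :=
    calc _ ≤ ∫ ω, N n ω ^ 2 ∂μ :=
          hM.mul_sum_measureReal_lt_le_integral_sq_stoppedProcess hρ hL2
            (fun t => (hvar t).mono fun ω hω hlt => hω (hlt.trans_le (min_le_left _ _))) n
      _ ≤ (h + c) * k := hNmean ▸ integral_sq_le_mul_integral hNint hNbd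
          (memLp_stoppedProcess hρ hL2 n).integrable_sq
  have hcount := natCast_mul_measureReal_le_sum (μ := μ) ρ n
  calc μ.real {ω | (n : ℕ∞) < τ ω}
      ≤ μ.real {ω | h ≤ N n ω} + μ.real {ω | (n : ℕ∞) ≤ ρ ω} :=
        (measureReal_mono (setOf_lt_subset_stoppedProcess_hittingBtwn M (Set.Ici h) τ n)).trans
          (measureReal_union_le _ _)
    _ ≤ k / h + (h + c) * k / (v * n) := by
        gcongr
        · rw [le_div_iff₀ hh]; linarith
        · rw [le_div_iff₀ (by positivity)]; nlinarith

variable {E : Type*} [NormedAddCommGroup E] [NormedSpace ℝ E] [CompleteSpace E]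

theorem martingalePart_add_one_sub_ae_eq [SigmaFiniteFiltration μ ℱ] {f : ℕ → Ω → E}
    (hf : StronglyAdapted ℱ f) (hint : ∀ n, Integrable (f n) μ) (n : ℕ) :
    martingalePart f ℱ μ (n + 1) - martingalePart f ℱ μ n =ᵐ[μ]
      f (n + 1) - μ[f (n + 1)|ℱ n] := by
  have hfn : μ[f n|ℱ n] = f n := condExp_of_stronglyMeasurable (ℱ.le n) (hf n) (hint n)
  filter_upwards [condExp_sub (hint (n + 1)) (hint n) (ℱ n)] with ω hω
  simp only [martingalePart, predictablePart_add_one, Pi.sub_apply, Pi.add_apply, hω, hfn]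
  abel

theorem Supermartingale.predictablePart_nonpos [SigmaFiniteFiltration μ ℱ] {f : ℕ → Ω → ℝ}
    (hf : Supermartingale f ℱ μ) :
    ∀ᵐ ω ∂μ, ∀ n, predictablePart f ℱ μ n ω ≤ 0 := by
  have hfi : ∀ i, μ[f i|ℱ i] = f i := fun i =>
    condExp_of_stronglyMeasurable (ℱ.le i) (hf.stronglyAdapted i) (hf.integrable i)
  have hstep : ∀ᵐ ω ∂μ, ∀ i, (μ[f (i + 1) - f i|ℱ i]) ω ≤ 0 := by
    refine ae_all_iff.2 fun i => ?_
    filter_upwards [condExp_sub (hf.integrable (i + 1)) (hf.integrable i) (ℱ i),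
      hf.condExp_ae_le i.le_succ] with ω hω hle
    simp [hω, hfi, hle]
  filter_upwards [hstep] with ω hω n
  simpa [predictablePart] using Finset.sum_nonpos fun i _ => hω i

theorem Supermartingale.le_martingalePart [SigmaFiniteFiltration μ ℱ] {f : ℕ → Ω → ℝ}
    (hf : Supermartingale f ℱ μ) :
    ∀ᵐ ω ∂μ, ∀ n, f n ω ≤ martingalePart f ℱ μ n ω := by
  filter_upwards [hf.predictablePart_nonpos] with ω hω n
  simpa [martingalePart] using hω n

theorem Supermartingale.measureReal_lt_stoppingTime_le [IsProbabilityMeasure μ]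
    {W : ℕ → Ω → ℝ} (hW : Supermartingale W ℱ μ) (hpos : ∀ t, 0 ≤ᵐ[μ] W t) {k : ℝ}
    (h0 : W 0 =ᵐ[μ] fun _ => k) {c : ℝ}
    (hinc : ∀ t, ∀ᵐ ω ∂μ, |W (t + 1) ω - (μ[W (t + 1)|ℱ t]) ω| ≤ c)
    {τ : Ω → ℕ∞} (hτ : IsStoppingTime ℱ τ) {v : ℝ} (hv : 0 < v)
    (hvar : ∀ t : ℕ, ∀ᵐ ω ∂μ, (t : ℕ∞) < τ ω →
      v ≤ (μ[fun ω => (W (t + 1) ω - (μ[W (t + 1)|ℱ t]) ω) ^ 2|ℱ t]) ω)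
    {h : ℝ} (hkh : k < h) {n : ℕ} (hn : 0 < n) :
    μ.real {ω | (n : ℕ∞) < τ ω} ≤ k / h + (h + c) * k / (v * n) := by
  have hMinc := martingalePart_add_one_sub_ae_eq hW.stronglyAdapted hW.integrable
  refine (martingale_martingalePart hW.stronglyAdapted hW.integrable).measureReal_lt_stoppingTime_le
    ?_ (by simp only [martingalePart_zero]; exact h0) (fun t => ?_) hτ hv (fun t => ?_) hkh hn
  · filter_upwards [ae_all_iff.2 hpos, hW.le_martingalePart] with ω hWω hWM t
    exact (hWω t).trans (hWM t)
  · filter_upwards [hMinc t, hinc t] with ω hω hcω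
    exact (congrArg abs hω).trans_le hcω
  · filter_upwards [hvar t, condExp_congr_ae (m := ℱ t) ((hMinc t).mono fun ω hω =>
      congrArg (· ^ 2) hω)] with ω hvω heq hlt
    exact (hvω hlt).trans_eq heq.symm

end MeasureTheory

namespace MultiIsing

theorem tail_bound_arith {σ u B k : ℝ} {n : ℕ} (hσ : 0 < σ) (hk : 0 ≤ k)
    (hB : 12 * B ^ 2 < σ ^ 2 * u) (hu : 3 < u) (hn : u < n + 1) :
    k / (σ * Real.sqrt u / 2) + (σ * Real.sqrt u / 2 + 2 * B) * k / (σ ^ 2 * n) ≤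
      4 * k / (σ * Real.sqrt u) := by
  set S := σ * Real.sqrt u
  have hS : 0 < S := mul_pos hσ (Real.sqrt_pos.2 (by linarith))
  have hS2 : S ^ 2 = σ ^ 2 * u := by rw [mul_pow, Real.sq_sqrt (by linarith)]
  have hBS : 10 * B ≤ 3 * S := by nlinarith [sq_nonneg (10 * B - 3 * S), sq_nonneg (10 * B + 3 * S)]
  have hn : 0 < (n : ℝ) := by linarith
  -- `(S/2 + 2B) S ≤ (1/2 + 3/5) S² = 1.1 σ² u`, and `1.1 u < 2 n` since `n > u - 1` and `u > 3`
  have hkey : (S / 2 + 2 * B) * S ≤ 2 * (σ ^ 2 * n) := by nlinarith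
  have hsecond : (S / 2 + 2 * B) * k / (σ ^ 2 * n) ≤ 2 * k / S := by
    rw [div_le_div_iff₀ (by positivity) hS]
    nlinarith [mul_le_mul_of_nonneg_left hkey hk]
  calc k / (S / 2) + (S / 2 + 2 * B) * k / (σ ^ 2 * n) ≤ 2 * k / S + 2 * k / S := by
        rw [div_div_eq_mul_div, mul_comm k 2]
        linarith
    _ = 4 * k / S := by ring

/-- a nonnegative supermartingale starting at `k`, with increments
bounded by `B` and conditional variance at least `σ² > 0` on `{τ > t}`, satisfies
`P(τ > u) ≤ 4k/(σ√u)` for every `u > 12B²/σ²`. -/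
theorem supermartingale_stopping_tail
    {Ω : Type*} {m0 : MeasurableSpace Ω} {μ : Measure Ω} [IsProbabilityMeasure μ]
    (ℱ : Filtration ℕ m0)
    (W : ℕ → Ω → ℝ) (hW : Supermartingale W ℱ μ)
    (hpos : ∀ t : ℕ, 0 ≤ᵐ[μ] W t)
    (k : ℝ) (h0 : W 0 =ᵐ[μ] fun _ => k)
    (B : ℝ) (hB : ∀ t : ℕ, ∀ᵐ ω ∂μ, |W (t + 1) ω - W t ω| ≤ B)
    (τ : Ω → ℕ∞) (hτ : ∀ t : ℕ, MeasurableSet[ℱ t] {ω | τ ω ≤ (t : ℕ∞)})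
    (σ : ℝ) (hσ : 0 < σ)
    (hvar : ∀ t : ℕ, ∀ᵐ ω ∂μ, (t : ℕ∞) < τ ω →
      σ ^ 2 ≤ (μ[fun ω' => (W (t + 1) ω' - (μ[W (t + 1)|ℱ t]) ω') ^ 2|ℱ t]) ω) :
    ∀ u : ℝ, 12 * B ^ 2 / σ ^ 2 < u →
      (μ {ω | (⌊u⌋₊ : ℕ∞) < τ ω}).toReal ≤ 4 * k / (σ * Real.sqrt u) := by
  intro u hu
  have hinc : ∀ t, ∀ᵐ ω ∂μ, |W (t + 1) ω - (μ[W (t + 1)|ℱ t]) ω| ≤ 2 * B := fun t =>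
    abs_sub_condExp_le_two_mul (ℱ.le t) (hW.integrable _) (hW.integrable _)
      (hW.stronglyAdapted t) (hB t)
  have hk : 0 ≤ k := by
    obtain ⟨ω, hω, hω0⟩ := ((hpos 0).and h0).exists
    exact hω.trans_eq hω0
  have hu0 : 0 < u := (by positivity : (0 : ℝ) ≤ 12 * B ^ 2 / σ ^ 2).trans_lt hu
  have hS : 0 < σ * Real.sqrt u := mul_pos hσ (Real.sqrt_pos.2 hu0)
  rw [← measureReal_def]
  rcases le_or_gt (σ * Real.sqrt u) (4 * k) with hkS | hkS
  · exact measureReal_le_one.trans ((one_le_div hS).2 hkS)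
  rcases lt_or_ge ((2 * B) ^ 2) (σ ^ 2) with hσB | hσB
  · rw [measureReal_def, measure_eq_zero_of_le_condExp_sq (s := {ω | (⌊u⌋₊ : ℕ∞) < τ ω})
      (hinc _) (hvar _) hσB, ENNReal.toReal_zero]
    positivity
  have hu3 : 3 < u := lt_of_le_of_lt (by rw [le_div_iff₀ (by positivity)]; nlinarith) hu
  calc μ.real {ω | (⌊u⌋₊ : ℕ∞) < τ ω}
      ≤ k / (σ * Real.sqrt u / 2) + (σ * Real.sqrt u / 2 + 2 * B) * k / (σ ^ 2 * ⌊u⌋₊) :=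
        hW.measureReal_lt_stoppingTime_le hpos h0 hinc hτ (by positivity) hvar (by linarith)
          (Nat.floor_pos.2 (by linarith))
    _ ≤ 4 * k / (σ * Real.sqrt u) :=
        tail_bound_arith hσ hk (by rw [div_lt_iff₀ (by positivity)] at hu; linarith) hu3
          (Nat.lt_floor_add_one u)

end MultiIsing
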